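/- The map ψ : ℚ_p × ℤ_p² → ℤ_p² defined via digit reversal (as in the previous context) is a group action of the additive group (ℚ_p, +) on ℤ_p²: ψ(0,(x,y)) = (x,y) and ψ(g₁+g₂,(x,y)) = ψ(g₁, ψ(g₂,(x,y))) for all g₁,g₂ ∈ ℚ_p and (x,y) ∈ ℤ_p². -/

import Mathlib

open scoped Classical

/-- Reversal of the base-`p` digit string of length `n`. -/
def rev (p n a : ℕ) : ℕ := ∑ i ∈ Finset.range n, (a / p ^ (n - 1 - i) % p) * p ^ i

open Finset in
lemma sum_digits_lt (p : ℕ) (hp : 2 ≤ p) (d : ℕ → ℕ) (hd : ∀ i, d i < p) (n : ℕ) :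
    ∑ i ∈ range n, d i * p ^ i < p ^ n := by
  induction n with
  | zero => simp
  | succ n ih =>
    rw [Finset.sum_range_succ, pow_succ]
    have h1 : d n * p ^ n ≤ (p - 1) * p ^ n :=
      Nat.mul_le_mul_right _ (Nat.le_sub_one_of_lt (hd n))
    have h2 : (p - 1) * p ^ n + p ^ n = p ^ n * p := by
      cases p with
      | zero => omega
      | succ q => simp [Nat.succ_sub_one]; ring
    omega

open Finset in
lemma digit_sum (p : ℕ) (hp : 2 ≤ p) (d : ℕ → ℕ) (hd : ∀ i, d i < p) {n j : ℕ} (hj : j < n) :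
    (∑ i ∈ range n, d i * p ^ i) / p ^ j % p = d j := by
  have hsplit : ∑ i ∈ range n, d i * p ^ i
      = (∑ i ∈ range j, d i * p ^ i) + p ^ j * ∑ i ∈ range (n - j), d (j + i) * p ^ i := by
    rw [Finset.mul_sum]
    have : ∑ i ∈ range (n - j), p ^ j * (d (j + i) * p ^ i)
        = ∑ i ∈ range (n - j), d (j + i) * p ^ (j + i) := by
      refine Finset.sum_congr rfl fun i _ => ?_
      rw [pow_add]; ring
    rw [this]
    rw [← Finset.sum_range_add_sum_Ico _ (le_of_lt hj)]
    congr 1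
    rw [Finset.sum_Ico_eq_sum_range]
  have hA : (∑ i ∈ range j, d i * p ^ i) < p ^ j := sum_digits_lt p hp d hd j
  rw [hsplit, Nat.add_mul_div_left _ _ (pow_pos (by omega) j), Nat.div_eq_of_lt hA,
    zero_add]
  have hnj : n - j = (n - j - 1) + 1 := by omega
  rw [hnj, Finset.sum_range_succ']
  simp only [add_zero]
  have : ∑ i ∈ range (n - j - 1), d (j + (i + 1)) * p ^ (i + 1)
      = p * ∑ i ∈ range (n - j - 1), d (j + (i + 1)) * p ^ i := by
    rw [Finset.mul_sum]; refine Finset.sum_congr rfl fun i _ => ?_; ring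
  rw [this, pow_zero, mul_one, add_comm, Nat.add_mul_mod_self_left, Nat.mod_eq_of_lt (hd j)]

open Finset in
lemma self_digits (p : ℕ) (hp : 2 ≤ p) : ∀ {n a : ℕ}, a < p ^ n →
    ∑ i ∈ range n, (a / p ^ i % p) * p ^ i = a := by
  intro n
  induction n with
  | zero => intro a ha; simp at ha ⊢; omega
  | succ n ih =>
    intro a ha
    rw [Finset.sum_range_succ']
    simp only [pow_zero, Nat.div_one, mul_one]
    have : ∑ i ∈ range n, (a / p ^ (i + 1) % p) * p ^ (i + 1)
        = p * ∑ i ∈ range n, ((a / p) / p ^ i % p) * p ^ i := by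
      rw [Finset.mul_sum]; refine Finset.sum_congr rfl fun i _ => ?_
      rw [pow_succ', Nat.div_div_eq_div_mul]; ring
    rw [this, ih (by rw [Nat.div_lt_iff_lt_mul (by omega : 0 < p)]; rw [pow_succ] at ha; exact ha)]
    exact Nat.div_add_mod a p


lemma rev_lt (p : ℕ) (hp : 2 ≤ p) (n a : ℕ) : rev p n a < p ^ n :=
  sum_digits_lt p hp _ (fun _ => Nat.mod_lt _ (by omega)) n

lemma digit_rev (p : ℕ) (hp : 2 ≤ p) (n a : ℕ) {j : ℕ} (hj : j < n) :
    rev p n a / p ^ j % p = a / p ^ (n - 1 - j) % p :=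
  digit_sum p hp _ (fun _ => Nat.mod_lt _ (by omega)) hj

lemma digit_mod (p n a : ℕ) {j : ℕ} (hj : j < n) :
    a % p ^ n / p ^ j % p = a / p ^ j % p := by
  rcases Nat.exists_eq_add_of_lt hj with ⟨k, rfl⟩
  rw [show j + k + 1 = j + (k + 1) by ring, pow_add, Nat.mod_mul_right_div_self,
    Nat.mod_mod_of_dvd _ (dvd_pow_self p (by omega))]

lemma rev_mod (p n a : ℕ) : rev p n (a % p ^ n) = rev p n a := by
  refine Finset.sum_congr rfl fun i hi => ?_
  rw [Finset.mem_range] at hi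
  rw [digit_mod p n a (by omega)]

lemma rev_rev (p : ℕ) (hp : 2 ≤ p) {n a : ℕ} (ha : a < p ^ n) :
    rev p n (rev p n a) = a := by
  unfold rev
  calc ∑ i ∈ Finset.range n, (rev p n a / p ^ (n - 1 - i) % p) * p ^ i
      = ∑ i ∈ Finset.range n, (a / p ^ i % p) * p ^ i := by
        refine Finset.sum_congr rfl fun i hi => ?_
        rw [Finset.mem_range] at hi
        rw [digit_rev p hp n a (by omega : n - 1 - i < n)]
        have h2 : n - 1 - (n - 1 - i) = i := by omega
        rw [h2]
    _ = a := self_digits p hp ha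

lemma rev_add (p : ℕ) (hp : 2 ≤ p) {n : ℕ} (k : ℕ) {u : ℕ} (d : ℕ) (hu : u < p ^ n) :
    rev p (n + k) (u + p ^ n * d) = rev p k (d % p ^ k) + p ^ k * rev p n u := by
  have hppos : 0 < p := by omega
  have hd : ∀ j, (u + p ^ n * d) / p ^ j % p = if j < n then u / p ^ j % p
      else d / p ^ (j - n) % p := by
    intro j
    split_ifs with h
    · have h1 : p ^ n * d = p ^ j * (p ^ (n - j) * d) := by
        rw [← mul_assoc, ← pow_add]
        congr 2
        omega
      rw [h1, Nat.add_mul_div_left _ _ (pow_pos hppos j)]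
      have h2 : p ^ (n - j) * d = p * (p ^ (n - j - 1) * d) := by
        rw [← mul_assoc]
        congr 1
        rw [← pow_succ']
        congr 1
        omega
      rw [h2, Nat.add_mul_mod_self_left]
    · push_neg at h
      have h1 : p ^ j = p ^ n * p ^ (j - n) := by
        rw [← pow_add]
        congr 1
        omega
      rw [h1, ← Nat.div_div_eq_div_mul, Nat.add_mul_div_left _ _ (pow_pos hppos n),
        Nat.div_eq_of_lt hu, Nat.zero_add]
  unfold rev
  rw [← Finset.sum_range_add_sum_Ico _ (Nat.le_add_left k n)]
  congr 1
  · refine Finset.sum_congr rfl fun i hi => ?_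
    rw [Finset.mem_range] at hi
    rw [hd, if_neg (by omega)]
    have h3 : n + k - 1 - i - n = k - 1 - i := by omega
    rw [h3, ← digit_mod p k d (by omega : k - 1 - i < k)]
  · rw [Finset.sum_Ico_eq_sum_range]
    have h4 : n + k - k = n := by omega
    rw [h4, Finset.mul_sum]
    refine Finset.sum_congr rfl fun i hi => ?_
    rw [Finset.mem_range] at hi
    rw [hd, if_pos (by omega : n + k - 1 - (k + i) < n)]
    have h5 : n + k - 1 - (k + i) = n - 1 - i := by omega
    rw [h5, pow_add]
    ring

/-- The result of applying the digit-reversal map, given the decomposition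
`g = z + a / p^n` of the acting group element. -/
noncomputable def psiOut (p : ℕ) [Fact p.Prime] (n : ℕ) (z : ℤ_[p]) (a : ℕ)
    (m : ℤ_[p] × ℤ_[p]) : ℤ_[p] × ℤ_[p] :=
  let b := m.2.appr n
  let c := a + rev p n b
  if c < p ^ n then (m.1 + z, m.2 - (b : ℤ_[p]) + (rev p n c : ℤ_[p]))
  else (m.1 + z + 1, m.2 - (b : ℤ_[p]) + (rev p n (c - p ^ n) : ℤ_[p]))

/-- The digit-reversal action of `(ℚ_p, +)` on `ℤ_p²`. -/
noncomputable def psi (p : ℕ) [Fact p.Prime] (g : ℚ_[p]) (m : ℤ_[p] × ℤ_[p]) :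
    ℤ_[p] × ℤ_[p] :=
  if h : ∃ n : ℕ, ∃ z : ℤ_[p], ∃ a : ℕ, a < p ^ n ∧
      g = (z : ℚ_[p]) + (a : ℚ_[p]) / (p : ℚ_[p]) ^ n then
    psiOut p h.choose h.choose_spec.choose h.choose_spec.choose_spec.choose m
  else m

section Padic
variable (p : ℕ) [hp : Fact p.Prime]

lemma two_le : 2 ≤ p := hp.out.two_le

/-- unified formula for psiOut -/
noncomputable def psiC (n : ℕ) (z : ℤ_[p]) (a : ℕ) (m : ℤ_[p] × ℤ_[p]) : ℤ_[p] × ℤ_[p] :=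
  (m.1 + z + (((a + rev p n (m.2.appr n)) / p ^ n : ℕ) : ℤ_[p]),
   m.2 - (m.2.appr n : ℤ_[p]) + ((rev p n ((a + rev p n (m.2.appr n)) % p ^ n) : ℕ) : ℤ_[p]))

lemma psiOut_eq_psiC {n a : ℕ} (ha : a < p ^ n) (z : ℤ_[p]) (m : ℤ_[p] × ℤ_[p]) :
    psiOut p n z a m = psiC p n z a m := by
  have h2 : 2 ≤ p := two_le p
  unfold psiOut psiC
  set b := m.2.appr n with hb
  have hr : rev p n b < p ^ n := rev_lt p h2 n b
  set c := a + rev p n b with hc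
  by_cases h : c < p ^ n
  · rw [if_pos h, Nat.div_eq_of_lt h, Nat.mod_eq_of_lt h]
    simp [hc]
  · rw [if_neg h]
    push_neg at h
    have hd : c / p ^ n = 1 := Nat.div_eq_of_lt_le (by simpa using h) (by
      rw [Nat.succ_mul, Nat.one_mul]; omega)
    have hm : c % p ^ n = c - p ^ n := by
      conv_lhs => rw [show c = (c - p ^ n) + 1 * p ^ n by omega]
      rw [Nat.add_mul_mod_self_right, Nat.mod_eq_of_lt (by omega)]
    rw [hd, hm]
    simp [add_assoc, hc]

lemma appr_unique (x : ℤ_[p]) {n t : ℕ} (ht : t < p ^ n)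
    (h : x - (t : ℤ_[p]) ∈ Ideal.span {(p : ℤ_[p]) ^ n}) : x.appr n = t := by
  have h1 := x.appr_spec n
  have h2 : ((x.appr n : ℤ_[p])) - (t : ℤ_[p]) ∈ Ideal.span {(p : ℤ_[p]) ^ n} := by
    have := Ideal.sub_mem _ h h1
    simpa using this
  rw [Ideal.mem_span_singleton] at h2
  set w : ℤ := (x.appr n : ℤ) - (t : ℤ) with hw
  have h3 : (p : ℤ_[p]) ^ n ∣ (w : ℤ_[p]) := by
    rw [hw]
    push_cast
    exact h2
  rw [PadicInt.pow_p_dvd_int_iff] at h3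
  have hplt : (x.appr n : ℤ) < (p : ℤ) ^ n := by exact_mod_cast x.appr_lt n
  have htlt : (t : ℤ) < (p : ℤ) ^ n := by exact_mod_cast ht
  have h4 : ((x.appr n : ℤ) - t) = 0 := by
    apply Int.eq_zero_of_abs_lt_dvd h3
    rw [hw, abs_lt]
    omega
  omega

lemma appr_add_pow (x : ℤ_[p]) (n k : ℕ) :
    ∃ d : ℕ, d < p ^ k ∧ x.appr (n + k) = x.appr n + p ^ n * d := by
  obtain ⟨d, hd⟩ := x.dvd_appr_sub_appr n (n + k) (Nat.le_add_right n k)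
  have hmono := x.appr_mono (Nat.le_add_right n k)
  refine ⟨d, ?_, by omega⟩
  have h1 : x.appr (n + k) < p ^ (n + k) := x.appr_lt _
  rw [pow_add] at h1
  have h2 : p ^ n * d < p ^ n * p ^ k := by omega
  exact Nat.lt_of_mul_lt_mul_left h2

lemma psiC_pad {n a : ℕ} (ha : a < p ^ n) (k : ℕ) (z : ℤ_[p]) (m : ℤ_[p] × ℤ_[p]) :
    psiC p (n + k) z (a * p ^ k) m = psiC p n z a m := by
  have h2 : 2 ≤ p := two_le p
  obtain ⟨d, hdk, hd⟩ := appr_add_pow p m.2 n k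
  set b := m.2.appr n with hb
  have hbn : b < p ^ n := m.2.appr_lt n
  have hrev : rev p (n + k) (m.2.appr (n + k)) = rev p k d + p ^ k * rev p n b := by
    rw [hd, rev_add p h2 k d hbn, Nat.mod_eq_of_lt hdk]
  set s := a + rev p n b with hs
  set r := rev p k d with hrdef
  have hrk : r < p ^ k := rev_lt p h2 k d
  have hs' : a * p ^ k + rev p (n + k) (m.2.appr (n + k)) = p ^ k * s + r := by
    rw [hrev, hs]; ring
  have hdiv : (p ^ k * s + r) / p ^ (n + k) = s / p ^ n := by
    rw [pow_add, mul_comm (p ^ n) (p ^ k), ← Nat.div_div_eq_div_mul,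
      Nat.mul_add_div (pow_pos (by omega) k), Nat.div_eq_of_lt hrk, Nat.add_zero]
  have hsplit : p ^ k * s + r = (r + p ^ k * (s % p ^ n)) + p ^ (n + k) * (s / p ^ n) := by
    conv_lhs => rw [show s = p ^ n * (s / p ^ n) + s % p ^ n from (Nat.div_add_mod s (p ^ n)).symm]
    ring
  have hmod : (p ^ k * s + r) % p ^ (n + k) = r + p ^ k * (s % p ^ n) := by
    rw [hsplit, Nat.add_mul_mod_self_left, Nat.mod_eq_of_lt]
    have h3 : s % p ^ n < p ^ n := Nat.mod_lt _ (pow_pos (by omega) n)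
    have h4 : p ^ k * (s % p ^ n) + p ^ k ≤ p ^ k * p ^ n := by
      have h5 := Nat.mul_le_mul_left (p ^ k) (by omega : s % p ^ n + 1 ≤ p ^ n)
      rw [Nat.mul_add, Nat.mul_one] at h5
      exact h5
    rw [pow_add, mul_comm (p ^ n) (p ^ k)]
    omega
  have hrevmod : rev p (n + k) ((p ^ k * s + r) % p ^ (n + k))
      = rev p n (s % p ^ n) + p ^ n * d := by
    rw [hmod, show n + k = k + n by ring, rev_add p h2 n (s % p ^ n) hrk,
      Nat.mod_mod_of_dvd _ dvd_rfl, hrdef, rev_rev p h2 hdk]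
  unfold psiC
  rw [hs'] at *
  refine Prod.ext ?_ ?_
  · simp only
    rw [hdiv]
  · simp only
    rw [hrevmod, hd]
    push_cast
    ring
end Padic

section Padic2
variable (p : ℕ) [hp : Fact p.Prime]

lemma decomp_unique {n n' : ℕ} (h : n ≤ n') {z z' : ℤ_[p]} {a a' : ℕ}
    (ha : a < p ^ n) (ha' : a' < p ^ n')
    (heq : (z : ℚ_[p]) + (a : ℚ_[p]) / (p : ℚ_[p]) ^ n
      = (z' : ℚ_[p]) + (a' : ℚ_[p]) / (p : ℚ_[p]) ^ n') :
    z = z' ∧ a' = a * p ^ (n' - n) := by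
  have h2 : 2 ≤ p := two_le p
  have hp0 : (p : ℚ_[p]) ≠ 0 := Nat.cast_ne_zero.mpr (by omega)
  have hpn : (p : ℚ_[p]) ^ n ≠ 0 := pow_ne_zero _ hp0
  have hpn' : (p : ℚ_[p]) ^ n' ≠ 0 := pow_ne_zero _ hp0
  have hsplit : (p : ℚ_[p]) ^ n' = (p : ℚ_[p]) ^ n * (p : ℚ_[p]) ^ (n' - n) := by
    rw [← pow_add]
    congr 1
    omega
  have e1 : ((a : ℚ_[p]) / (p : ℚ_[p]) ^ n) * (p : ℚ_[p]) ^ n = a := div_mul_cancel₀ _ hpn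
  have e2 : ((a' : ℚ_[p]) / (p : ℚ_[p]) ^ n') * (p : ℚ_[p]) ^ n' = a' := div_mul_cancel₀ _ hpn'
  have key : ((a' : ℚ_[p]) - (a : ℚ_[p]) * (p : ℚ_[p]) ^ (n' - n))
      = (p : ℚ_[p]) ^ n' * ((z : ℚ_[p]) - (z' : ℚ_[p])) := by
    linear_combination (-(p : ℚ_[p]) ^ n') * heq - e2 + ((p : ℚ_[p]) ^ (n' - n)) * e1
      + ((a : ℚ_[p]) * ((p : ℚ_[p]) ^ n)⁻¹) * hsplit
  set w : ℤ := (a' : ℤ) - (a : ℤ) * (p : ℤ) ^ (n' - n) with hw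
  have hZp : ((w : ℤ_[p])) = (p : ℤ_[p]) ^ n' * (z - z') := by
    apply Subtype.coe_injective
    push_cast [hw]
    convert key using 2 <;> push_cast <;> ring
  have hdvd : (p : ℤ_[p]) ^ n' ∣ (w : ℤ_[p]) := ⟨z - z', hZp⟩
  rw [PadicInt.pow_p_dvd_int_iff] at hdvd
  have hbound : a * p ^ (n' - n) < p ^ n' := by
    calc a * p ^ (n' - n) < p ^ n * p ^ (n' - n) :=
          mul_lt_mul_of_pos_right ha (pow_pos (by omega) _)
      _ = p ^ n' := by rw [← pow_add]; congr 1; omega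
  have hw0 : w = 0 := by
    apply Int.eq_zero_of_abs_lt_dvd hdvd
    rw [hw, abs_lt]
    have c1 : (a : ℤ) * (p : ℤ) ^ (n' - n) < (p : ℤ) ^ n' := by exact_mod_cast hbound
    have c2 : (a' : ℤ) < (p : ℤ) ^ n' := by exact_mod_cast ha'
    have c0 : 0 ≤ (a : ℤ) * (p : ℤ) ^ (n' - n) := by positivity
    push_cast at c0 c1 c2 ⊢
    omega
  have haa : a' = a * p ^ (n' - n) := by
    have h6 : (a' : ℤ) = (a : ℤ) * (p : ℤ) ^ (n' - n) := by
      rw [hw] at hw0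
      omega
    exact_mod_cast h6
  refine ⟨?_, haa⟩
  rw [hw0] at hZp
  have hpZ : (p : ℤ_[p]) ^ n' ≠ 0 :=
    pow_ne_zero _ (Nat.cast_ne_zero.mpr (by omega))
  have := mul_eq_zero.mp hZp.symm
  rcases this with h' | h'
  · exact absurd h' hpZ
  · exact sub_eq_zero.mp h'


lemma decomp_exists (g : ℚ_[p]) : ∃ n : ℕ, ∃ z : ℤ_[p], ∃ a : ℕ, a < p ^ n ∧
    g = (z : ℚ_[p]) + (a : ℚ_[p]) / (p : ℚ_[p]) ^ n := by
  have h2 : 2 ≤ p := two_le p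
  obtain ⟨N, hN⟩ := exists_nat_gt ‖g‖
  have hNp : (N : ℝ) ≤ (p : ℝ) ^ N := by
    exact_mod_cast (Nat.lt_pow_self (n := N) (by omega : 1 < p)).le
  have hle : ‖(p : ℚ_[p]) ^ N * g‖ ≤ 1 := by
    rw [norm_mul, norm_pow, Padic.norm_p]
    have hp1 : (1 : ℝ) < (p : ℝ) := by exact_mod_cast (by omega : 1 < p)
    have hppos : (0 : ℝ) < (p : ℝ) ^ N := by positivity
    rw [inv_pow]
    rw [inv_mul_le_iff₀ hppos, mul_one]
    exact le_trans hN.le hNp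
  set w : ℤ_[p] := ⟨(p : ℚ_[p]) ^ N * g, hle⟩ with hwdef
  set a : ℕ := w.appr N with hadef
  have hspec := w.appr_spec N
  rw [Ideal.mem_span_singleton] at hspec
  obtain ⟨z, hz⟩ := hspec
  refine ⟨N, z, a, w.appr_lt N, ?_⟩
  have hq : (p : ℚ_[p]) ^ N * g - (a : ℚ_[p]) = (p : ℚ_[p]) ^ N * (z : ℚ_[p]) := by
    have := congrArg (fun t : ℤ_[p] => (t : ℚ_[p])) hz
    push_cast at this
    convert this using 2
  have hp0 : (p : ℚ_[p]) ≠ 0 := Nat.cast_ne_zero.mpr (by omega)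
  have hpn : (p : ℚ_[p]) ^ N ≠ 0 := pow_ne_zero _ hp0
  field_simp
  linear_combination hq

lemma decomp_pad {g : ℚ_[p]} {n a : ℕ} {z : ℤ_[p]} (ha : a < p ^ n)
    (hg : g = (z : ℚ_[p]) + (a : ℚ_[p]) / (p : ℚ_[p]) ^ n) (k : ℕ) :
    a * p ^ k < p ^ (n + k) ∧
      g = (z : ℚ_[p]) + ((a * p ^ k : ℕ) : ℚ_[p]) / (p : ℚ_[p]) ^ (n + k) := by
  have h2 : 2 ≤ p := two_le p
  have hp0 : (p : ℚ_[p]) ≠ 0 := Nat.cast_ne_zero.mpr (by omega)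
  constructor
  · rw [pow_add]
    exact mul_lt_mul_of_pos_right ha (pow_pos (by omega) _)
  · rw [hg]
    congr 1
    have hc : ((a * p ^ k : ℕ) : ℚ_[p]) = (a : ℚ_[p]) * (p : ℚ_[p]) ^ k := by push_cast; ring
    rw [hc, pow_add, mul_div_mul_right _ _ (pow_ne_zero k hp0)]

lemma psi_eq (g : ℚ_[p]) {n a : ℕ} {z : ℤ_[p]} (ha : a < p ^ n)
    (hg : g = (z : ℚ_[p]) + (a : ℚ_[p]) / (p : ℚ_[p]) ^ n) (m : ℤ_[p] × ℤ_[p]) :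
    psi p g m = psiC p n z a m := by
  have hex : ∃ n : ℕ, ∃ z : ℤ_[p], ∃ a : ℕ, a < p ^ n ∧
      g = (z : ℚ_[p]) + (a : ℚ_[p]) / (p : ℚ_[p]) ^ n := ⟨n, z, a, ha, hg⟩
  have key : ∀ (N : ℕ) (Z : ℤ_[p]) (A : ℕ), A < p ^ N →
      g = (Z : ℚ_[p]) + (A : ℚ_[p]) / (p : ℚ_[p]) ^ N → psiC p N Z A m = psiC p n z a m := by
    intro N Z A hA hgA
    rcases le_total n N with h | h
    · obtain ⟨k, rfl⟩ : ∃ k, N = n + k := ⟨N - n, by omega⟩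
      obtain ⟨hz, haA⟩ := decomp_unique p h ha hA (hg.symm.trans hgA)
      rw [Nat.add_sub_cancel_left] at haA
      rw [← hz, haA]
      exact psiC_pad p ha k z m
    · obtain ⟨k, rfl⟩ : ∃ k, n = N + k := ⟨n - N, by omega⟩
      obtain ⟨hz, haA⟩ := decomp_unique p h hA ha (hgA.symm.trans hg)
      rw [Nat.add_sub_cancel_left] at haA
      rw [haA, ← hz]
      exact (psiC_pad p hA k Z m).symm
  unfold psi
  rw [dif_pos hex]
  obtain ⟨hA, hgA⟩ := hex.choose_spec.choose_spec.choose_spec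
  rw [psiOut_eq_psiC p hA _ m]
  exact key _ _ _ hA hgA

lemma appr_shift (y : ℤ_[p]) {n t : ℕ} (ht : t < p ^ n) :
    (y - (y.appr n : ℤ_[p]) + (t : ℤ_[p])).appr n = t := by
  apply appr_unique p _ ht
  simpa using y.appr_spec n

lemma psiC_comp (n a₁ a₂ : ℕ) (z₁ z₂ : ℤ_[p]) (m : ℤ_[p] × ℤ_[p]) :
    psiC p n z₁ a₁ (psiC p n z₂ a₂ m) =
      psiC p n (z₁ + z₂ + (((a₁ + a₂) / p ^ n : ℕ) : ℤ_[p])) ((a₁ + a₂) % p ^ n) m := by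
  have h2 : 2 ≤ p := two_le p
  have hppos : 0 < p ^ n := pow_pos (by omega) _
  set b := m.2.appr n with hb
  set r := rev p n b with hr
  set s₂ := a₂ + r with hs₂
  have happr2 : (psiC p n z₂ a₂ m).2.appr n = rev p n (s₂ % p ^ n) := by
    show (m.2 - (b : ℤ_[p]) + ((rev p n (s₂ % p ^ n) : ℕ) : ℤ_[p])).appr n = _
    exact appr_shift p m.2 (rev_lt p h2 n _)
  have hrev2 : rev p n ((psiC p n z₂ a₂ m).2.appr n) = s₂ % p ^ n := by
    rw [happr2, rev_rev p h2 (Nat.mod_lt _ hppos)]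
  have E1 : (a₁ + s₂ % p ^ n) / p ^ n + s₂ / p ^ n
      = (a₁ + a₂) / p ^ n + ((a₁ + a₂) % p ^ n + r) / p ^ n := by
    have l1 : (a₁ + a₂ + r) / p ^ n = (a₁ + s₂ % p ^ n) / p ^ n + s₂ / p ^ n := by
      conv_lhs => rw [show a₁ + a₂ + r = a₁ + s₂ % p ^ n + p ^ n * (s₂ / p ^ n) by
        have := Nat.div_add_mod s₂ (p ^ n); omega]
      rw [Nat.add_mul_div_left _ _ hppos]
    have l2 : (a₁ + a₂ + r) / p ^ n = (a₁ + a₂) / p ^ n + ((a₁ + a₂) % p ^ n + r) / p ^ n := by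
      conv_lhs => rw [show a₁ + a₂ + r = (a₁ + a₂) % p ^ n + r + p ^ n * ((a₁ + a₂) / p ^ n) by
        have := Nat.div_add_mod (a₁ + a₂) (p ^ n); omega]
      rw [Nat.add_mul_div_left _ _ hppos, add_comm]
    omega
  have E2 : (a₁ + s₂ % p ^ n) % p ^ n = ((a₁ + a₂) % p ^ n + r) % p ^ n := by
    have l1 : (a₁ + s₂ % p ^ n) % p ^ n = (a₁ + s₂) % p ^ n := by
      rw [Nat.add_mod, Nat.mod_mod_of_dvd _ dvd_rfl, ← Nat.add_mod]
    have l2 : ((a₁ + a₂) % p ^ n + r) % p ^ n = (a₁ + a₂ + r) % p ^ n := by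
      rw [Nat.add_mod, Nat.mod_mod_of_dvd _ dvd_rfl, ← Nat.add_mod]
    rw [l1, l2, hs₂]
    congr 1
    omega
  refine Prod.ext ?_ ?_
  · show (psiC p n z₂ a₂ m).1 + z₁
        + (((a₁ + rev p n ((psiC p n z₂ a₂ m).2.appr n)) / p ^ n : ℕ) : ℤ_[p]) = _
    rw [hrev2]
    show m.1 + z₂ + ((s₂ / p ^ n : ℕ) : ℤ_[p]) + z₁ + _ = _
    show _ = m.1 + (z₁ + z₂ + (((a₁ + a₂) / p ^ n : ℕ) : ℤ_[p]))
        + ((((a₁ + a₂) % p ^ n + r) / p ^ n : ℕ) : ℤ_[p])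
    have := congrArg (fun t : ℕ => ((t : ℕ) : ℤ_[p])) E1
    push_cast at this ⊢
    linear_combination this
  · show (psiC p n z₂ a₂ m).2 - (((psiC p n z₂ a₂ m).2.appr n : ℕ) : ℤ_[p])
        + ((rev p n ((a₁ + rev p n ((psiC p n z₂ a₂ m).2.appr n)) % p ^ n) : ℕ) : ℤ_[p]) = _
    rw [hrev2, happr2, E2]
    show m.2 - (b : ℤ_[p]) + ((rev p n (s₂ % p ^ n) : ℕ) : ℤ_[p])
        - ((rev p n (s₂ % p ^ n) : ℕ) : ℤ_[p])
        + ((rev p n (((a₁ + a₂) % p ^ n + r) % p ^ n) : ℕ) : ℤ_[p]) = _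
    show _ = m.2 - (b : ℤ_[p]) + ((rev p n (((a₁ + a₂) % p ^ n + r) % p ^ n) : ℕ) : ℤ_[p])
    ring
end Padic2


/-- The digit-reversal map `ψ` is an action of the additive group `(ℚ_p, +)` on `ℤ_p²`. -/
theorem psi_is_group_action (p : ℕ) [Fact p.Prime] :
    (∀ m : ℤ_[p] × ℤ_[p], psi p 0 m = m) ∧
    (∀ (g₁ g₂ : ℚ_[p]) (m : ℤ_[p] × ℤ_[p]),
      psi p (g₁ + g₂) m = psi p g₁ (psi p g₂ m)) := by
  have h2 : 2 ≤ p := two_le p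
  have hppos : ∀ n : ℕ, 0 < p ^ n := fun n => pow_pos (by omega) _
  constructor
  · intro m
    have h0 : (0 : ℚ_[p]) = ((0 : ℤ_[p]) : ℚ_[p]) + ((0 : ℕ) : ℚ_[p]) / (p : ℚ_[p]) ^ 0 := by
      simp
    rw [psi_eq p 0 (by norm_num : (0 : ℕ) < p ^ 0) h0 m]
    have happr0 : m.2.appr 0 = 0 := by
      have := m.2.appr_lt 0
      simpa using this
    unfold psiC
    rw [happr0]
    simp [rev]
  · intro g₁ g₂ m
    obtain ⟨n₁, z₁, a₁, ha₁, hg₁⟩ := decomp_exists p g₁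
    obtain ⟨n₂, z₂, a₂, ha₂, hg₂⟩ := decomp_exists p g₂
    set n := max n₁ n₂ with hn
    obtain ⟨ha₁', hg₁'⟩ := decomp_pad p ha₁ hg₁ (n - n₁)
    obtain ⟨ha₂', hg₂'⟩ := decomp_pad p ha₂ hg₂ (n - n₂)
    rw [show n₁ + (n - n₁) = n by omega] at ha₁' hg₁'
    rw [show n₂ + (n - n₂) = n by omega] at ha₂' hg₂'
    set b₁ := a₁ * p ^ (n - n₁) with hb₁
    set b₂ := a₂ * p ^ (n - n₂) with hb₂
    set q := (b₁ + b₂) / p ^ n with hq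
    set A := (b₁ + b₂) % p ^ n with hA
    have hAlt : A < p ^ n := Nat.mod_lt _ (hppos n)
    have hnat : p ^ n * q + A = b₁ + b₂ := Nat.div_add_mod _ _
    have hcast : (p : ℚ_[p]) ^ n * (q : ℚ_[p]) + (A : ℚ_[p]) = (b₁ : ℚ_[p]) + (b₂ : ℚ_[p]) := by
      exact_mod_cast congrArg (fun t : ℕ => (t : ℚ_[p])) hnat
    have hp0 : (p : ℚ_[p]) ≠ 0 := Nat.cast_ne_zero.mpr (by omega)
    have hpn : (p : ℚ_[p]) ^ n ≠ 0 := pow_ne_zero _ hp0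
    have hg : g₁ + g₂ = ((z₁ + z₂ + (q : ℤ_[p]) : ℤ_[p]) : ℚ_[p])
        + (A : ℚ_[p]) / (p : ℚ_[p]) ^ n := by
      rw [hg₁', hg₂']
      push_cast
      field_simp
      linear_combination -hcast
    rw [psi_eq p (g₁ + g₂) hAlt hg m, psi_eq p g₂ ha₂' hg₂' m,
      psi_eq p g₁ ha₁' hg₁' (psiC p n z₂ b₂ m), psiC_comp]
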